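/- In the Beltrami-Klein model with distance d(x,y) = arccosh((1 − ⟨x,y⟩)/(sqrt(1−|x|²) sqrt(1−|y|²))) on the open unit disk, Euclidean straight-line segments are geodesics: if z lies on the Euclidean segment between x and y, then d(x,z) + d(z,y) = d(x,y). -/

import Mathlib

/-!
With the Lorentz form `B(x,y) = 1 - ⟪x,y⟫` we have `cosh d(x,y) = B(x,y) / √(B(x,x) B(y,y))`,
and `arcosh u = log (u + √(u² - 1))` turns `d` into the logarithm of
`(B(x,y) + √G(x,y)) / √(B(x,x) B(y,y))`, where `G(x,y) = B(x,y)² - B(x,x) B(y,y) ≥ 0` is the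
(negated) Gram determinant. For `z = (1-t) x + t y` bilinearity gives `G(x,z) = t² G(x,y)` and
`G(z,y) = (1-t)² G(x,y)`, and the product of the two logarithm arguments for `d(x,z)` and
`d(z,y)` collapses to the one for `d(x,y)`.
-/

/-- The inverse hyperbolic cosine. -/
noncomputable def arcosh (x : ℝ) : ℝ := Real.log (x + Real.sqrt (x ^ 2 - 1))

/-- The Cayley–Klein hyperbolic distance on the open unit disk. -/
noncomputable def kleinDist (x y : EuclideanSpace ℝ (Fin 2)) : ℝ :=
  arcosh ((1 - (inner ℝ x y : ℝ)) /
    (Real.sqrt (1 - ‖x‖ ^ 2) * Real.sqrt (1 - ‖y‖ ^ 2)))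

lemma convex_combo_pos {a b t : ℝ} (ha : 0 < a) (hb : 0 < b) (ht0 : 0 ≤ t) (ht1 : t ≤ 1) :
    0 < (1 - t) * a + t * b :=
  convex_Ioi (0 : ℝ) ha hb (sub_nonneg.2 ht1) ht0 (sub_add_cancel 1 t)

lemma arcosh_div_sqrt_mul {p q : ℝ} (hp : 0 < p) (hq : 0 < q) (r : ℝ) :
    arcosh (r / (√p * √q)) = Real.log ((r + √(r ^ 2 - p * q)) / (√p * √q)) := by
  have hs : 0 < √p * √q := by positivity
  have hsq : (√p * √q) ^ 2 = p * q := by rw [mul_pow, Real.sq_sqrt hp.le, Real.sq_sqrt hq.le]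
  have : (r / (√p * √q)) ^ 2 - 1 = (r ^ 2 - p * q) / (√p * √q) ^ 2 := by
    rw [div_pow, hsq, div_sub_one (by positivity)]
  rw [arcosh, this, Real.sqrt_div' _ (sq_nonneg _), Real.sqrt_sq hs.le, add_div]

/-- `u, v, w` are `B(x,z), B(z,y), B(z,z)` for `z = (1 - t) x + t y`, where `p = B(x,x)`,
`q = B(y,y)`, `r = B(x,y)` and `B` is a symmetric bilinear form. -/
lemma arcosh_add_of_segment {p q r t u v w : ℝ} (hp : 0 < p) (hq : 0 < q) (hr : 0 < r)
    (hpq : p * q ≤ r ^ 2) (ht0 : 0 ≤ t) (ht1 : t ≤ 1)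
    (hu : u = (1 - t) * p + t * r) (hv : v = (1 - t) * r + t * q)
    (hw : w = (1 - t) ^ 2 * p + 2 * (t * (1 - t)) * r + t ^ 2 * q) :
    arcosh (u / (√p * √w)) + arcosh (v / (√w * √q)) = arcosh (r / (√p * √q)) := by
  have hu0 : 0 < u := hu ▸ convex_combo_pos hp hr ht0 ht1
  have hv0 : 0 < v := hv ▸ convex_combo_pos hr hq ht0 ht1
  have hw0 : 0 < w := by
    rw [show w = (1 - t) * u + t * v by rw [hu, hv, hw]; ring]
    exact convex_combo_pos hu0 hv0 ht0 ht1
  have gram_u : u ^ 2 - p * w = t ^ 2 * (r ^ 2 - p * q) := by rw [hu, hw]; ring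
  have gram_v : v ^ 2 - w * q = (1 - t) ^ 2 * (r ^ 2 - p * q) := by rw [hv, hw]; ring
  have hD : 0 ≤ r ^ 2 - p * q := sub_nonneg.2 hpq
  rw [arcosh_div_sqrt_mul hp hw0, arcosh_div_sqrt_mul hw0 hq, arcosh_div_sqrt_mul hp hq,
    ← Real.log_mul (by positivity) (by positivity),
    gram_u, gram_v, Real.sqrt_mul (sq_nonneg _), Real.sqrt_mul (sq_nonneg _), Real.sqrt_sq ht0,
    Real.sqrt_sq (sub_nonneg.2 ht1)]
  congr 1
  have hd := Real.sq_sqrt hD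
  have hsw := Real.sq_sqrt hw0.le
  field_simp
  subst hu hv hw
  linear_combination (t * (1 - t)) * hd - (r + √(r ^ 2 - p * q)) * hsw

section InnerProductSpace

variable {E : Type*} [NormedAddCommGroup E] [InnerProductSpace ℝ E]

lemma one_sub_inner_combo_right (x y : E) (t : ℝ) :
    1 - inner ℝ x ((1 - t) • x + t • y) = (1 - t) * (1 - ‖x‖ ^ 2) + t * (1 - inner ℝ x y) := by
  rw [inner_add_right, real_inner_smul_right, real_inner_smul_right, real_inner_self_eq_norm_sq]
  ring

lemma one_sub_inner_combo_left (x y : E) (t : ℝ) :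
    1 - inner ℝ ((1 - t) • x + t • y) y = (1 - t) * (1 - inner ℝ x y) + t * (1 - ‖y‖ ^ 2) := by
  rw [inner_add_left, real_inner_smul_left, real_inner_smul_left, real_inner_self_eq_norm_sq]
  ring

lemma one_sub_norm_combo_sq (x y : E) (t : ℝ) :
    1 - ‖(1 - t) • x + t • y‖ ^ 2
      = (1 - t) ^ 2 * (1 - ‖x‖ ^ 2) + 2 * (t * (1 - t)) * (1 - inner ℝ x y)
        + t ^ 2 * (1 - ‖y‖ ^ 2) := by
  rw [norm_add_sq_real, norm_smul, norm_smul, real_inner_smul_left, real_inner_smul_right,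
    mul_pow, mul_pow, Real.norm_eq_abs, Real.norm_eq_abs, sq_abs, sq_abs]
  ring

lemma one_sub_inner_pos {x y : E} (hx : ‖x‖ < 1) (hy : ‖y‖ ≤ 1) : 0 < 1 - inner ℝ x y := by
  have := real_inner_le_norm x y
  nlinarith [norm_nonneg x, norm_nonneg y]

lemma one_sub_norm_sq_mul_le_sq_one_sub_inner {x y : E} (hx : ‖x‖ ≤ 1) (hy : ‖y‖ ≤ 1) :
    (1 - ‖x‖ ^ 2) * (1 - ‖y‖ ^ 2) ≤ (1 - inner ℝ x y) ^ 2 := by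
  have hxy := real_inner_le_norm x y
  have hxy1 : ‖x‖ * ‖y‖ ≤ 1 := mul_le_one₀ hx (norm_nonneg y) hy
  calc (1 - ‖x‖ ^ 2) * (1 - ‖y‖ ^ 2) = (1 - ‖x‖ * ‖y‖) ^ 2 - (‖x‖ - ‖y‖) ^ 2 := by ring
    _ ≤ (1 - ‖x‖ * ‖y‖) ^ 2 := by nlinarith [sq_nonneg (‖x‖ - ‖y‖)]
    _ ≤ (1 - inner ℝ x y) ^ 2 := by gcongr

end InnerProductSpace

/-- Euclidean segments are geodesics of the Beltrami–Klein model: if `z` lies on the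
Euclidean segment between `x` and `y`, then `d(x,z) + d(z,y) = d(x,y)`. -/
theorem kleinDist_additive_on_segments (x y z : EuclideanSpace ℝ (Fin 2))
    (hx : ‖x‖ < 1) (hy : ‖y‖ < 1)
    (hz : ∃ t : ℝ, t ∈ Set.Icc (0 : ℝ) 1 ∧ z = (1 - t) • x + t • y) :
    kleinDist x z + kleinDist z y = kleinDist x y := by
  obtain ⟨t, ⟨ht0, ht1⟩, rfl⟩ := hz
  unfold kleinDist
  have hp : 0 < 1 - ‖x‖ ^ 2 := by nlinarith [norm_nonneg x]
  have hq : 0 < 1 - ‖y‖ ^ 2 := by nlinarith [norm_nonneg y]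
  exact arcosh_add_of_segment hp hq (one_sub_inner_pos hx hy.le)
    (one_sub_norm_sq_mul_le_sq_one_sub_inner hx.le hy.le) ht0 ht1
    (one_sub_inner_combo_right x y t) (one_sub_inner_combo_left x y t)
    (one_sub_norm_combo_sq x y t)
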